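/- arXiv:1505.03399 — 4 statements merged into one kernel-verified Lean document; each statement's English description precedes it below -/
import Mathlib

section
/- Let G : ℂ^(n×m₁) × ℂ^(n×m₂) → ℂ^(n×(m₁m₂)) be the map sending (D,E) to the matrix G_{DE} whose column indexed by (j,k) is the circular convolution D^{(:,j)} ⊛ E^{(:,k)}. If n ≥ m₁m₂, then for almost all (D,E) (i.e., all pairs outside a set of Lebesgue measure zero), the matrix G_{DE} has full column rank m₁m₂. -/
/-!
Choose rows `ρ (j, k) = m₂ j + k` of `G_{DE}`, which are distinct because `m₁ m₂ ≤ n`. The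
determinant of the resulting square minor is a polynomial in the entries of `D` and `E`, and it
is not the zero polynomial: for the standard basis vectors `e_i`, `e_a ⊛ e_b = e_{a+b}`, so at
`D^{(:,j)} = e_{m₂ j}`, `E^{(:,k)} = e_k` the minor is the identity. A nonzero complex polynomial
vanishes only on a Lebesgue-null set (induction on the number of variables with Fubini, a nonzero
univariate polynomial having finitely many roots). Off that set the minor is invertible, so the
columns of `G_{DE}` are linearly independent.
-/

open MeasureTheory

/-- Circular convolution of two vectors in `ℂ^n`. -/
noncomputable def cconv {n : ℕ} (u v : Fin n → ℂ) : Fin n → ℂ :=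
  fun i => ∑ j, u j * v (i - j)

/-- `μ.map L` is an additive Haar measure on `F`, hence absolutely continuous with respect to `ν`. -/
theorem ae_comp_linearEquiv {𝕜 E F : Type*} [NontriviallyNormedField 𝕜] [ProperSpace 𝕜]
    [NormedAddCommGroup E] [NormedSpace 𝕜 E] [FiniteDimensional 𝕜 E] [MeasurableSpace E]
    [BorelSpace E] [NormedAddCommGroup F] [NormedSpace 𝕜 F] [MeasurableSpace F] [BorelSpace F]
    (μ : Measure E) [μ.IsAddHaarMeasure] (ν : Measure F) [ν.IsAddHaarMeasure] (L : E ≃ₗ[𝕜] F)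
    {P : F → Prop} (h : ∀ᵐ y ∂ν, P y) : ∀ᵐ x ∂μ, P (L x) :=
  have : FiniteDimensional 𝕜 F := L.finiteDimensional
  have : ProperSpace F := FiniteDimensional.proper 𝕜 F
  ae_of_ae_map L.toContinuousLinearEquiv.continuous.aemeasurable
    ((Measure.absolutelyContinuous_isAddHaarMeasure _ ν).ae_le h)

namespace MvPolynomial

theorem ae_eval_fin_ne_zero :
    ∀ {N : ℕ} {p : MvPolynomial (Fin N) ℂ}, p ≠ 0 → ∀ᵐ x ∂volume, eval x p ≠ 0
  | 0, p, hp => by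
    obtain ⟨c, rfl⟩ := C_surjective (Fin 0) p
    exact ae_of_all _ fun x => by simpa using hp
  | N + 1, p, hp => by
    set q := finSuccEquiv ℂ N p
    have hq : q ≠ 0 := (map_ne_zero_iff _ (finSuccEquiv ℂ N).injective).2 hp
    have hfiber : ∀ᵐ y : Fin N → ℂ, ∀ᵐ z : ℂ, eval (Fin.cons z y) p ≠ 0 := by
      filter_upwards [ae_eval_fin_ne_zero (Polynomial.leadingCoeff_ne_zero.2 hq)] with y hy
      have hqy : q.map (eval y) ≠ 0 := fun h0 => hy <| by
        rw [Polynomial.leadingCoeff, ← Polynomial.coeff_map, h0, Polynomial.coeff_zero]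
      filter_upwards [measure_eq_zero_iff_ae_notMem.1
        ((Polynomial.finite_setOfPred_isRoot hqy).measure_zero _)] with z hz
      rwa [eval_eq_eval_mv_eval']
    have hmeas : MeasurableSet {w : (Fin N → ℂ) × ℂ | eval (Fin.cons w.2 w.1) p ≠ 0} :=
      (isOpen_ne_fun ((continuous_eval p).comp (continuous_snd.finCons continuous_fst))
        continuous_const).measurableSet
    have hprod := (Measure.ae_prod_iff_ae_ae hmeas).2 hfiber
    have hswap := Measure.measurePreserving_swap.quasiMeasurePreserving.ae hprod
    filter_upwards
      [(volume_preserving_piFinSuccAbove (fun _ => ℂ) 0).quasiMeasurePreserving.ae hswap] with x hx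
    simpa [Fin.insertNthEquiv] using hx

theorem ae_eval_linearEquiv_ne_zero {ι E : Type*} [Fintype ι] [NormedAddCommGroup E]
    [NormedSpace ℂ E] [FiniteDimensional ℂ E] [MeasurableSpace E] [BorelSpace E]
    (μ : Measure E) [μ.IsAddHaarMeasure] (L : E ≃ₗ[ℂ] ι → ℂ) {p : MvPolynomial ι ℂ}
    (hp : p ≠ 0) : ∀ᵐ x ∂μ, eval (L x) p ≠ 0 := by
  let e := Fintype.equivFin ι
  have hp' : rename e p ≠ 0 := (map_ne_zero_iff _ (rename_injective _ e.injective)).2 hp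
  filter_upwards [ae_comp_linearEquiv μ volume (L.trans (LinearEquiv.funCongrLeft ℂ ℂ e.symm))
    (ae_eval_fin_ne_zero hp')] with x hx
  simpa [eval_rename, Function.comp_def] using hx

end MvPolynomial

theorem linearIndependent_of_isUnit_det_submatrix {R κ ι : Type*} [CommRing R] [Fintype κ]
    [DecidableEq κ] (v : κ → ι → R) (ρ : κ → ι) (h : IsUnit ((Matrix.of v).submatrix id ρ).det) :
    LinearIndependent R v :=
  .of_comp (LinearMap.funLeft R R ρ)
    (Matrix.linearIndependent_rows_of_isUnit ((Matrix.isUnit_iff_isUnit_det _).2 h))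

theorem Fin.exists_injective_add {n m₁ m₂ : ℕ} [NeZero n] (h : m₁ * m₂ ≤ n) :
    ∃ (a : Fin m₁ → Fin n) (b : Fin m₂ → Fin n),
      Function.Injective fun jk : Fin m₁ × Fin m₂ => a jk.1 + b jk.2 := by
  refine ⟨fun j => Fin.ofNat n (m₂ * j), fun k => Fin.ofNat n k, ?_⟩
  have hcast : ∀ jk : Fin m₁ × Fin m₂,
      Fin.ofNat n (m₂ * jk.1) + Fin.ofNat n jk.2 = Fin.castLE h (finProdFinEquiv jk) := by
    intro jk
    have hlt := (Fin.castLE h (finProdFinEquiv jk)).isLt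
    simp only [Fin.val_castLE, finProdFinEquiv_apply_val] at hlt
    ext
    simp only [Fin.val_add, Fin.val_ofNat, ← Nat.add_mod, Fin.val_castLE,
      finProdFinEquiv_apply_val]
    rw [Nat.mod_eq_of_lt (by omega), add_comm]
  intro x y hxy
  simp only [hcast] at hxy
  exact finProdFinEquiv.injective (Fin.castLE_injective h hxy)

theorem cconv_single_single {n : ℕ} [NeZero n] (a b : Fin n) (x y : ℂ) :
    cconv (Pi.single a x) (Pi.single b y) = Pi.single (a + b) (x * y) := by
  funext i
  rw [cconv, Fintype.sum_eq_single a fun j hj => by simp [hj]]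
  simp [Pi.single_apply, sub_eq_iff_eq_add']

def pairEntriesEquiv (R α β γ δ : Type*) [Semiring R] :
    ((α → β → R) × (γ → δ → R)) ≃ₗ[R] (α × β ⊕ γ × δ → R) :=
  ((LinearEquiv.curry R R α β).symm.prodCongr (LinearEquiv.curry R R γ δ).symm).trans
    (LinearEquiv.sumArrowLequivProdArrow _ _ R R).symm

/-- Instance search does not find this through the nested `volume`. -/
theorem isAddHaarMeasure_volume_pairEntries (α β γ δ : Type*) [Fintype α] [Fintype β]
    [Fintype γ] [Fintype δ] :
    (volume : Measure ((α → β → ℂ) × (γ → δ → ℂ))).IsAddHaarMeasure :=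
  have : (volume : Measure (α → β → ℂ)).IsAddHaarMeasure := Measure.pi.isAddHaarMeasure _
  have : (volume : Measure (γ → δ → ℂ)).IsAddHaarMeasure := Measure.pi.isAddHaarMeasure _
  Measure.prod.instIsAddHaarMeasure _ _

section ConvolutionMatrix

variable {n m₁ m₂ : ℕ}

/-- `convCols D E (j, k)` is the column `D^{(:,j)} ⊛ E^{(:,k)}` of `G_{DE}`. -/
noncomputable def convCols (D : Fin n → Fin m₁ → ℂ) (E : Fin n → Fin m₂ → ℂ) :
    Fin m₁ × Fin m₂ → Fin n → ℂ :=
  fun jk => cconv (fun r => D r jk.1) (fun r => E r jk.2)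

/-- The minor of `G_{DE}ᵀ` on the columns `ρ`, with the entries of `D` and `E` as indeterminates. -/
noncomputable def convMinorPoly (ρ : Fin m₁ × Fin m₂ → Fin n) :
    Matrix (Fin m₁ × Fin m₂) (Fin m₁ × Fin m₂) (MvPolynomial (Fin n × Fin m₁ ⊕ Fin n × Fin m₂) ℂ) :=
  Matrix.of fun jk jk' =>
    ∑ r, MvPolynomial.X (.inl (r, jk.1)) * MvPolynomial.X (.inr (ρ jk' - r, jk.2))

theorem eval_det_convMinorPoly (ρ : Fin m₁ × Fin m₂ → Fin n)
    (DE : (Fin n → Fin m₁ → ℂ) × (Fin n → Fin m₂ → ℂ)) :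
    MvPolynomial.eval (pairEntriesEquiv ℂ _ _ _ _ DE) (convMinorPoly ρ).det =
      ((Matrix.of (convCols DE.1 DE.2)).submatrix id ρ).det := by
  rw [RingHom.map_det]
  congr 1
  ext jk jk'
  simp [convMinorPoly, convCols, cconv, pairEntriesEquiv]

theorem submatrix_convCols_single_eq_one [NeZero n] (a : Fin m₁ → Fin n) (b : Fin m₂ → Fin n)
    (hab : Function.Injective fun jk : Fin m₁ × Fin m₂ => a jk.1 + b jk.2) :
    (Matrix.of (convCols (fun r j => (Pi.single (a j) 1 : Fin n → ℂ) r)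
      fun r k => (Pi.single (b k) 1 : Fin n → ℂ) r)).submatrix
        id (fun jk : Fin m₁ × Fin m₂ => a jk.1 + b jk.2) = 1 := by
  ext jk jk'
  simp only [Matrix.submatrix_apply, Matrix.of_apply, id, convCols, cconv_single_single]
  simp [Matrix.one_apply, Pi.single_apply, hab.eq_iff, eq_comm]

theorem det_convMinorPoly_ne_zero [NeZero n] (a : Fin m₁ → Fin n) (b : Fin m₂ → Fin n)
    (hab : Function.Injective fun jk : Fin m₁ × Fin m₂ => a jk.1 + b jk.2) :
    (convMinorPoly fun jk => a jk.1 + b jk.2).det ≠ 0 := by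
  intro h0
  have := eval_det_convMinorPoly (fun jk => a jk.1 + b jk.2)
    (fun r j => (Pi.single (a j) 1 : Fin n → ℂ) r, fun r k => (Pi.single (b k) 1 : Fin n → ℂ) r)
  rw [h0, submatrix_convCols_single_eq_one a b hab, map_zero, Matrix.det_one] at this
  exact zero_ne_one this

end ConvolutionMatrix

/-- If `n ≥ m₁m₂`, then for almost all `(D,E)` the matrix `G_{DE}`, whose column indexed by
`(j,k)` is `D^{(:,j)} ⊛ E^{(:,k)}`, has full column rank (linearly independent columns). -/
theorem blind_deconv_generic_full_column_rank {n m₁ m₂ : ℕ} (h : m₁ * m₂ ≤ n) :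
    ∀ᵐ DE : (Fin n → Fin m₁ → ℂ) × (Fin n → Fin m₂ → ℂ) ∂volume,
      LinearIndependent ℂ
        (fun jk : Fin m₁ × Fin m₂ =>
          fun i => cconv (fun r => DE.1 r jk.1) (fun r => DE.2 r jk.2) i) := by
  rcases eq_or_ne n 0 with rfl | hn
  · have : IsEmpty (Fin m₁ × Fin m₂) := Fintype.card_eq_zero_iff.1 (by simpa using h)
    exact ae_of_all _ fun _ => linearIndependent_empty_type
  have : NeZero n := ⟨hn⟩
  obtain ⟨a, b, hab⟩ := Fin.exists_injective_add h
  have := isAddHaarMeasure_volume_pairEntries (Fin n) (Fin m₁) (Fin n) (Fin m₂)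
  filter_upwards [MvPolynomial.ae_eval_linearEquiv_ne_zero volume (pairEntriesEquiv ℂ _ _ _ _)
    (det_convMinorPoly_ne_zero a b hab)] with DE hDE
  rw [eval_det_convMinorPoly] at hDE
  exact linearIndependent_of_isUnit_det_submatrix _ _ hDE.isUnit
end

section
/- In blind deconvolution with a sparsity constraint on x (mixed constraints): if n ≥ 2s₁m₂, then for almost all D ∈ ℂ^{n×m₁} and E ∈ ℂ^{n×m₂}, every pair (x₀,y₀) with ‖x₀‖₀ ≤ s₁, x₀ ≠ 0, y₀ ≠ 0 is identifiable up to scaling: any (x,y) with ‖x‖₀ ≤ s₁ and (Dx) ⊛ (Ey) = (Dx₀) ⊛ (Ey₀) satisfies x = σx₀ and y = σ^{-1}y₀ for some nonzero σ ∈ ℂ. -/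
open MeasureTheory

/-- Matrix-vector multiplication. -/
noncomputable def mulVecF {n m : ℕ} (A : Fin n → Fin m → ℂ) (x : Fin m → ℂ) : Fin n → ℂ :=
  fun i => ∑ j, A i j * x j

/-- The number of nonzero entries (`ℓ₀` "norm") of a vector. -/
noncomputable def sparsity {m : ℕ} (x : Fin m → ℂ) : ℕ := {j | x j ≠ 0}.ncard

/-! ### Auxiliary material: zero sets of nonzero polynomials are null -/

lemma measurable_mveval {ι : Type*} (p : MvPolynomial ι ℂ) :
    Measurable fun v : ι → ℂ => MvPolynomial.eval v p := by
  simp_rw [MvPolynomial.eval_eq]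
  refine Finset.measurable_sum _ fun d _ => Measurable.const_mul ?_ _
  exact Finset.measurable_prod _ fun i _ => (measurable_pi_apply i).pow_const _

lemma mvpoly_null_fin : ∀ (k : ℕ) (p : MvPolynomial (Fin k) ℂ), p ≠ 0 →
    volume {v : Fin k → ℂ | MvPolynomial.eval v p = 0} = 0 := by
  intro k
  induction k with
  | zero =>
    intro p hp
    obtain ⟨a, rfl⟩ := MvPolynomial.C_surjective (Fin 0) p
    have ha : a ≠ 0 := fun h => hp (by rw [h, map_zero])
    have he : {v : Fin 0 → ℂ | MvPolynomial.eval v (MvPolynomial.C a) = 0} = ∅ := by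
      ext v; simp [ha]
    rw [he, measure_empty]
  | succ k ih =>
    intro p hp
    set q := MvPolynomial.finSuccEquiv ℂ k p with hqdef
    have hq0 : q ≠ 0 := by
      intro h0
      apply hp
      have := congrArg (MvPolynomial.finSuccEquiv ℂ k).symm h0
      simpa [hqdef] using this
    have hlc : q.leadingCoeff ≠ 0 := Polynomial.leadingCoeff_ne_zero.mpr hq0
    set S := {ys : ℂ × (Fin k → ℂ) |
      Polynomial.eval ys.1 (Polynomial.map (MvPolynomial.eval ys.2) q) = 0} with hSdef
    have hfmeas : Measurable fun ys : ℂ × (Fin k → ℂ) =>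
        Polynomial.eval ys.1 (Polynomial.map (MvPolynomial.eval ys.2) q) := by
      have hrw : (fun ys : ℂ × (Fin k → ℂ) =>
          Polynomial.eval ys.1 (Polynomial.map (MvPolynomial.eval ys.2) q)) =
          fun ys => ∑ i ∈ q.support, MvPolynomial.eval ys.2 (q.coeff i) * ys.1 ^ i := by
        funext ys
        rw [Polynomial.eval_map, Polynomial.eval₂_eq_sum, Polynomial.sum_def]
      rw [hrw]
      exact Finset.measurable_sum _ fun i _ =>
        ((measurable_mveval (q.coeff i)).comp measurable_snd).mul (measurable_fst.pow_const i)
    have hSmeas : MeasurableSet S := hfmeas (measurableSet_singleton 0)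
    have hZ : {v : Fin (k+1) → ℂ | MvPolynomial.eval v p = 0} =
        (MeasurableEquiv.piFinSuccAbove (fun _ : Fin (k+1) => ℂ) 0) ⁻¹' S := by
      ext v
      simp only [Set.mem_preimage, Set.mem_setOf_eq, hSdef]
      have h1 : ((MeasurableEquiv.piFinSuccAbove (fun _ : Fin (k+1) => ℂ) 0) v).1 = v 0 := rfl
      have h2 : ((MeasurableEquiv.piFinSuccAbove (fun _ : Fin (k+1) => ℂ) 0) v).2 = Fin.tail v := by
        funext j
        show v ((0 : Fin (k+1)).succAbove j) = v j.succ
        rw [Fin.succAbove_zero]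
      rw [h1, h2, ← MvPolynomial.eval_eq_eval_mv_eval', Fin.cons_self_tail]
    rw [hZ, (volume_preserving_piFinSuccAbove (fun _ : Fin (k+1) => ℂ) 0).measure_preimage
      hSmeas.nullMeasurableSet]
    rw [Measure.volume_eq_prod]
    have hswap : (volume.prod volume) S = (volume.prod volume) (Prod.swap ⁻¹' S) := by
      conv_lhs => rw [← Measure.prod_swap]
      rw [Measure.map_apply measurable_swap hSmeas]
    rw [hswap, Measure.measure_prod_null (measurable_swap hSmeas)]
    have h1 : ∀ᵐ s : (Fin k → ℂ) ∂volume, MvPolynomial.eval s q.leadingCoeff ≠ 0 := by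
      have h2 := ih q.leadingCoeff hlc
      rw [ae_iff]
      simp only [not_not]
      exact h2
    filter_upwards [h1] with s hs
    have hmapne : Polynomial.map (MvPolynomial.eval s) q ≠ 0 := by
      intro h0
      apply hs
      have hc : (Polynomial.map (MvPolynomial.eval s) q).coeff q.natDegree = 0 := by
        rw [h0, Polynomial.coeff_zero]
      rw [Polynomial.coeff_map] at hc
      exact hc
    have hset : (Prod.mk s ⁻¹' (Prod.swap ⁻¹' S)) =
        {y : ℂ | Polynomial.IsRoot (Polynomial.map (MvPolynomial.eval s) q) y} := rfl
    simp only [Pi.zero_apply]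
    rw [hset]
    exact (Polynomial.finite_setOf_isRoot hmapne).measure_zero _

lemma mvpoly_null {ι : Type*} [Fintype ι] (p : MvPolynomial ι ℂ) (hp : p ≠ 0) :
    volume {v : ι → ℂ | MvPolynomial.eval v p = 0} = 0 := by
  classical
  set e := Fintype.equivFin ι with hedef
  set p' := MvPolynomial.rename (⇑e) p with hp'def
  have hp' : p' ≠ 0 := by
    intro h0
    exact hp (MvPolynomial.rename_injective _ e.injective (by simpa [hp'def] using h0))
  set Φ := MeasurableEquiv.piCongrLeft (fun _ : Fin (Fintype.card ι) => ℂ) e with hΦdef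
  have happ : ∀ v : ι → ℂ, ∀ j : Fin (Fintype.card ι), Φ v j = v (e.symm j) := by
    intro v j
    rw [hΦdef]
    show (Equiv.piCongrLeft (fun _ => ℂ) e) v j = v (e.symm j)
    conv_lhs => rw [show j = e (e.symm j) from (e.apply_symm_apply j).symm]
    rw [Equiv.piCongrLeft_apply_apply]
  have hset : {v : ι → ℂ | MvPolynomial.eval v p = 0} =
      Φ ⁻¹' {w : Fin (Fintype.card ι) → ℂ | MvPolynomial.eval w p' = 0} := by
    ext v
    simp only [Set.mem_preimage, Set.mem_setOf_eq, hp'def]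
    rw [MvPolynomial.eval_rename]
    have : ((Φ v) ∘ ⇑e) = v := by
      funext i
      simp [happ]
    rw [this]
  rw [hset]
  have hmeas : MeasurableSet {w : Fin (Fintype.card ι) → ℂ | MvPolynomial.eval w p' = 0} :=
    measurable_mveval p' (measurableSet_singleton 0)
  rw [(volume_measurePreserving_piCongrLeft (fun _ => ℂ) e).measure_preimage
    hmeas.nullMeasurableSet]
  exact mvpoly_null_fin _ p' hp'

/-! ### Flattening the pair of matrices into a single vector of variables -/

noncomputable def uncur {a b : Type*} (f : a → b → ℂ) : a × b → ℂ := fun p => f p.1 p.2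

noncomputable def uncurEquiv (a b : Type*) : (a → b → ℂ) ≃ᵐ (a × b → ℂ) :=
  { toFun := uncur
    invFun := fun g i j => g (i, j)
    left_inv := fun _ => rfl
    right_inv := fun _ => rfl
    measurable_toFun := measurable_pi_lambda _ fun p =>
      (measurable_pi_apply p.2).comp (measurable_pi_apply p.1)
    measurable_invFun := measurable_pi_lambda _ fun i => measurable_pi_lambda _ fun j =>
      ((measurable_pi_apply (i, j)) : Measurable fun g : a × b → ℂ => g (i, j)) }

lemma measurePreserving_uncur {a b : Type*} [Fintype a] [Fintype b] :
    MeasurePreserving (uncur (a := a) (b := b)) volume volume := by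
  have hc : (uncur (a := a) (b := b)) = ⇑(uncurEquiv a b) := rfl
  rw [hc]
  refine ⟨(uncurEquiv a b).measurable, ?_⟩
  refine (Measure.pi_eq fun s hs => ?_).symm
  rw [(uncurEquiv a b).map_apply]
  have : ((uncurEquiv a b) ⁻¹' Set.univ.pi s) =
      Set.univ.pi fun i => Set.univ.pi fun j => s (i, j) := by
    ext f
    simp only [Set.mem_preimage, Set.mem_univ_pi]
    exact ⟨fun h i j => h (i, j), fun h p => h p.1 p.2⟩
  rw [this]
  simp_rw [MeasureTheory.volume_pi, Measure.pi_pi]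
  rw [Fintype.prod_prod_type]

section
variable {n m₁ m₂ : ℕ}

noncomputable def flat (DE : (Fin n → Fin m₁ → ℂ) × (Fin n → Fin m₂ → ℂ)) :
    ((Fin n × Fin m₁) ⊕ (Fin n × Fin m₂)) → ℂ :=
  (MeasurableEquiv.sumPiEquivProdPi (fun _ => ℂ)).symm (uncur DE.1, uncur DE.2)

lemma measurePreserving_flat :
    MeasurePreserving (flat (n := n) (m₁ := m₁) (m₂ := m₂)) volume volume := by
  have h1 : MeasurePreserving
      (Prod.map (uncur (a := Fin n) (b := Fin m₁)) (uncur (a := Fin n) (b := Fin m₂)))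
      volume volume :=
    measurePreserving_uncur.prod measurePreserving_uncur
  have h2 := volume_measurePreserving_sumPiEquivProdPi_symm
    (fun _ : (Fin n × Fin m₁) ⊕ (Fin n × Fin m₂) => ℂ)
  exact h2.comp h1

lemma space_poly_null (p : MvPolynomial ((Fin n × Fin m₁) ⊕ (Fin n × Fin m₂)) ℂ) (hp : p ≠ 0) :
    volume {DE : (Fin n → Fin m₁ → ℂ) × (Fin n → Fin m₂ → ℂ) |
      MvPolynomial.eval (flat DE) p = 0} = 0 := by
  have hset : {DE : (Fin n → Fin m₁ → ℂ) × (Fin n → Fin m₂ → ℂ) |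
      MvPolynomial.eval (flat DE) p = 0} =
      flat ⁻¹' {v | MvPolynomial.eval v p = 0} := rfl
  have hm : MeasurableSet {v : ((Fin n × Fin m₁) ⊕ (Fin n × Fin m₂)) → ℂ |
      MvPolynomial.eval v p = 0} := measurable_mveval p (measurableSet_singleton 0)
  rw [hset, measurePreserving_flat.measure_preimage hm.nullMeasurableSet]
  exact mvpoly_null p hp

/-! ### The generic injectivity property -/

/-- The bilinear kernel of the convolution measurements. -/
noncomputable def gker (DE : (Fin n → Fin m₁ → ℂ) × (Fin n → Fin m₂ → ℂ))
    (i : Fin n) (p : Fin m₁) (q : Fin m₂) : ℂ :=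
  ∑ j, DE.1 j p * DE.2 (i - j) q

lemma conv_expand (DE : (Fin n → Fin m₁ → ℂ) × (Fin n → Fin m₂ → ℂ))
    (x : Fin m₁ → ℂ) (y : Fin m₂ → ℂ) (i : Fin n) :
    cconv (mulVecF DE.1 x) (mulVecF DE.2 y) i = ∑ p, ∑ q, gker DE i p q * (x p * y q) := by
  unfold cconv mulVecF gker
  simp_rw [Finset.sum_mul_sum]
  rw [Finset.sum_comm]
  refine Finset.sum_congr rfl fun p _ => ?_
  rw [Finset.sum_comm]
  refine Finset.sum_congr rfl fun q _ => ?_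
  rw [Finset.sum_mul]
  refine Finset.sum_congr rfl fun j _ => ?_
  ring

/-- Injectivity of the measurement map on matrices with rows supported in `T`. -/
def Good (DE : (Fin n → Fin m₁ → ℂ) × (Fin n → Fin m₂ → ℂ)) (T : Finset (Fin m₁)) : Prop :=
  ∀ M : Fin m₁ → Fin m₂ → ℂ, (∀ p, p ∉ T → ∀ q, M p q = 0) →
    (∀ i, ∑ p, ∑ q, gker DE i p q * M p q = 0) → M = 0

noncomputable def rowIdx (T : Finset (Fin m₁)) (hT : T.card * m₂ ≤ n)
    (a : {x // x ∈ T} × Fin m₂) : Fin n :=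
  ⟨(T.equivFin a.1 : ℕ) + T.card * (a.2 : ℕ), by
    have h1 : (T.equivFin a.1 : ℕ) < T.card := (T.equivFin a.1).isLt
    have h2 : (a.2 : ℕ) + 1 ≤ m₂ := a.2.isLt
    have h3 : T.card * ((a.2 : ℕ) + 1) ≤ T.card * m₂ := Nat.mul_le_mul_left _ h2
    rw [Nat.mul_succ] at h3
    omega⟩

lemma rowIdx_inj (T : Finset (Fin m₁)) (hT : T.card * m₂ ≤ n) :
    Function.Injective (rowIdx T hT) := by
  rintro ⟨p, q⟩ ⟨p', q'⟩ hpq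
  have h1 : (T.equivFin p : ℕ) < T.card := (T.equivFin p).isLt
  have h2 : (T.equivFin p' : ℕ) < T.card := (T.equivFin p').isLt
  have hval : (T.equivFin p : ℕ) + T.card * (q : ℕ) =
      (T.equivFin p' : ℕ) + T.card * (q' : ℕ) := congrArg Fin.val hpq
  have hmod := congrArg (· % T.card) hval
  simp only [Nat.add_mul_mod_self_left] at hmod
  rw [Nat.mod_eq_of_lt h1, Nat.mod_eq_of_lt h2] at hmod
  have hq : (q : ℕ) = (q' : ℕ) := by
    have ht : 0 < T.card := by omega
    have : T.card * (q : ℕ) = T.card * (q' : ℕ) := by omega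
    exact Nat.eq_of_mul_eq_mul_left ht this
  have hp : p = p' := T.equivFin.injective (Fin.ext hmod)
  exact Prod.ext hp (Fin.ext hq)

noncomputable def Amat (T : Finset (Fin m₁)) (hT : T.card * m₂ ≤ n)
    (DE : (Fin n → Fin m₁ → ℂ) × (Fin n → Fin m₂ → ℂ)) :
    Matrix ({x // x ∈ T} × Fin m₂) ({x // x ∈ T} × Fin m₂) ℂ :=
  Matrix.of fun a b => gker DE (rowIdx T hT a) b.1 b.2

lemma good_of_det (T : Finset (Fin m₁)) (hT : T.card * m₂ ≤ n)
    (DE : (Fin n → Fin m₁ → ℂ) × (Fin n → Fin m₂ → ℂ))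
    (hdet : (Amat T hT DE).det ≠ 0) : Good DE T := by
  classical
  intro M hM0 hsum
  set A := Amat T hT DE with hA
  set mvec : {x // x ∈ T} × Fin m₂ → ℂ := fun b => M b.1 b.2 with hmvec
  have hmul : A.mulVec mvec = 0 := by
    funext a
    have hshow : A.mulVec mvec a = ∑ b, A a b * mvec b := rfl
    rw [hshow, Fintype.sum_prod_type]
    have hstep : ∑ p : {x // x ∈ T}, ∑ q, A a (p, q) * mvec (p, q) =
        ∑ p ∈ T, ∑ q, gker DE (rowIdx T hT a) p q * M p q := by
      rw [← Finset.sum_coe_sort T (fun p => ∑ q, gker DE (rowIdx T hT a) p q * M p q)]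
      rfl
    rw [hstep]
    rw [Finset.sum_subset (Finset.subset_univ T)]
    · exact hsum (rowIdx T hT a)
    · intro p _ hp
      simp [hM0 p hp]
  have hUnit : IsUnit A.det := isUnit_iff_ne_zero.mpr hdet
  have hmv : mvec = 0 := by
    calc mvec = (A⁻¹ * A).mulVec mvec := by
          rw [Matrix.nonsing_inv_mul _ hUnit, Matrix.one_mulVec]
      _ = A⁻¹.mulVec (A.mulVec mvec) := (Matrix.mulVec_mulVec _ _ _).symm
      _ = 0 := by rw [hmul, Matrix.mulVec_zero]
  funext p q
  by_cases hp : p ∈ T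
  · have := congrFun hmv (⟨p, hp⟩, q)
    simpa using this
  · simp [hM0 p hp q]

noncomputable def Pmat (T : Finset (Fin m₁)) (hT : T.card * m₂ ≤ n) :
    Matrix ({x // x ∈ T} × Fin m₂) ({x // x ∈ T} × Fin m₂)
      (MvPolynomial ((Fin n × Fin m₁) ⊕ (Fin n × Fin m₂)) ℂ) :=
  Matrix.of fun a b => ∑ j,
    MvPolynomial.X (Sum.inl (j, (b.1 : Fin m₁))) *
    MvPolynomial.X (Sum.inr (rowIdx T hT a - j, b.2))

lemma eval_Pmat_det (T : Finset (Fin m₁)) (hT : T.card * m₂ ≤ n)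
    (DE : (Fin n → Fin m₁ → ℂ) × (Fin n → Fin m₂ → ℂ)) :
    MvPolynomial.eval (flat DE) (Pmat T hT).det = (Amat T hT DE).det := by
  rw [RingHom.map_det]
  congr 1
  ext a b
  simp only [RingHom.mapMatrix_apply, Matrix.map_apply, Pmat, Amat, Matrix.of_apply, map_sum,
    map_mul, MvPolynomial.eval_X, gker]
  rfl

/-- The witness pair of matrices. -/
noncomputable def Wit (T : Finset (Fin m₁)) :
    (Fin n → Fin m₁ → ℂ) × (Fin n → Fin m₂ → ℂ) :=
  (fun j p => if hp : p ∈ T then (if (j : ℕ) = (T.equivFin ⟨p, hp⟩ : ℕ) then 1 else 0) else 0,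
   fun j q => if (j : ℕ) = T.card * (q : ℕ) then 1 else 0)

lemma Amat_wit (T : Finset (Fin m₁)) (hT : T.card * m₂ ≤ n) :
    Amat T hT (Wit T) = 1 := by
  classical
  ext a b
  obtain ⟨p, q⟩ := a
  obtain ⟨p', q'⟩ := b
  have hm₂ : 0 < m₂ := q.pos
  have ht : 0 < T.card := Finset.card_pos.mpr ⟨(p : Fin m₁), p.2⟩
  have htm : 0 < T.card * m₂ := Nat.mul_pos ht hm₂
  have hn : 0 < n := lt_of_lt_of_le htm hT
  haveI : NeZero n := ⟨by omega⟩
  have hidx : (T.equivFin p' : ℕ) < T.card := (T.equivFin p').isLt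
  have htn : T.card ≤ n := le_trans (Nat.le_mul_of_pos_right _ hm₂) hT
  set j₀ : Fin n := ⟨(T.equivFin p' : ℕ), lt_of_lt_of_le hidx htn⟩ with hj₀
  have hq'n : T.card * (q' : ℕ) + T.card ≤ n := by
    have h2 : (q' : ℕ) + 1 ≤ m₂ := q'.isLt
    have h3 : T.card * ((q' : ℕ) + 1) ≤ T.card * m₂ := Nat.mul_le_mul_left _ h2
    rw [Nat.mul_succ] at h3
    omega
  set w : Fin n := ⟨T.card * (q' : ℕ), by omega⟩ with hw
  have hentry : Amat T hT (Wit T) (p, q) (p', q') =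
      if ((rowIdx T hT (p, q) - j₀ : Fin n) : ℕ) = T.card * (q' : ℕ) then 1 else 0 := by
    show ∑ j, (Wit (n := n) (m₁ := m₁) (m₂ := m₂) T).1 j (p' : Fin m₁) *
        (Wit (n := n) (m₁ := m₁) (m₂ := m₂) T).2 (rowIdx T hT (p, q) - j) q' = _
    have hD : ∀ j : Fin n, (Wit (n := n) (m₁ := m₁) (m₂ := m₂) T).1 j (p' : Fin m₁) =
        if j = j₀ then 1 else 0 := by
      intro j
      show (if hp : (p' : Fin m₁) ∈ T then
          (if (j : ℕ) = (T.equivFin ⟨(p' : Fin m₁), hp⟩ : ℕ) then 1 else 0) else 0) = _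
      rw [dif_pos p'.2]
      congr 1
      simp only [Subtype.coe_eta]
      rw [Fin.ext_iff]
    simp_rw [hD, ite_mul, one_mul, zero_mul]
    rw [Finset.sum_ite_eq' Finset.univ j₀
      (fun j => (Wit (n := n) (m₁ := m₁) (m₂ := m₂) T).2 (rowIdx T hT (p, q) - j) q')]
    rw [if_pos (Finset.mem_univ _)]
    rfl
  rw [hentry]
  have hiff : (((rowIdx T hT (p, q) - j₀ : Fin n) : ℕ) = T.card * (q' : ℕ)) ↔
      ((p, q) = ((p', q') : {x // x ∈ T} × Fin m₂)) := by
    rw [show (T.card * (q' : ℕ)) = (w : ℕ) from rfl, ← Fin.ext_iff]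
    rw [sub_eq_iff_eq_add]
    have hwv : (w : ℕ) = T.card * (q' : ℕ) := rfl
    have hj₀v : (j₀ : ℕ) = (T.equivFin p' : ℕ) := rfl
    have hriv : (rowIdx T hT (p', q') : ℕ) = (T.equivFin p' : ℕ) + T.card * (q' : ℕ) := rfl
    have hweq : w + j₀ = rowIdx T hT (p', q') := by
      rw [Fin.ext_iff, Fin.val_add, hwv, hj₀v, hriv]
      rw [Nat.mod_eq_of_lt (by omega)]
      omega
    rw [hweq]
    exact ⟨fun hh => rowIdx_inj T hT hh, fun hh => by rw [hh]⟩
  rw [Matrix.one_apply]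
  by_cases hc : (p, q) = ((p', q') : {x // x ∈ T} × Fin m₂)
  · rw [if_pos (hiff.mpr hc), if_pos hc]
  · rw [if_neg (fun hh => hc (hiff.mp hh)), if_neg hc]

lemma Pmat_det_ne_zero (T : Finset (Fin m₁)) (hT : T.card * m₂ ≤ n) :
    (Pmat T hT).det ≠ 0 := by
  intro h0
  have h1 := eval_Pmat_det T hT (Wit T)
  rw [h0, map_zero, Amat_wit T hT, Matrix.det_one] at h1
  exact one_ne_zero h1.symm

end

/-- Theorem 3.5 (mixed constraints): if `n ≥ 2s₁m₂`, then for almost all `D, E`, every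
`(x₀,y₀)` with `‖x₀‖₀ ≤ s₁`, `x₀ ≠ 0`, `y₀ ≠ 0` is identifiable up to scaling among pairs
`(x,y)` with `‖x‖₀ ≤ s₁`. -/
theorem blind_deconv_mixed_identifiability {n m₁ m₂ s₁ : ℕ} (h : 2 * s₁ * m₂ ≤ n) :
    ∀ᵐ DE : (Fin n → Fin m₁ → ℂ) × (Fin n → Fin m₂ → ℂ) ∂volume,
      ∀ x₀ : Fin m₁ → ℂ, ∀ y₀ : Fin m₂ → ℂ,
        sparsity x₀ ≤ s₁ → x₀ ≠ 0 → y₀ ≠ 0 →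
        ∀ x : Fin m₁ → ℂ, ∀ y : Fin m₂ → ℂ, sparsity x ≤ s₁ →
          cconv (mulVecF DE.1 x) (mulVecF DE.2 y) =
            cconv (mulVecF DE.1 x₀) (mulVecF DE.2 y₀) →
          ∃ σ : ℂ, σ ≠ 0 ∧ x = σ • x₀ ∧ y = σ⁻¹ • y₀ := by
  classical
  have hae : ∀ᵐ DE : (Fin n → Fin m₁ → ℂ) × (Fin n → Fin m₂ → ℂ) ∂volume,
      ∀ T : Finset (Fin m₁), T.card * m₂ ≤ n → Good DE T := by
    rw [ae_all_iff]
    intro T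
    by_cases hT : T.card * m₂ ≤ n
    · rw [ae_iff]
      refine measure_mono_null ?_ (space_poly_null (Pmat T hT).det (Pmat_det_ne_zero T hT))
      intro DE hDE
      simp only [Set.mem_setOf_eq] at hDE ⊢
      have hbad : ¬ Good DE T := fun hg => hDE (fun _ => hg)
      by_contra hne
      apply hbad
      apply good_of_det T hT DE
      rw [← eval_Pmat_det T hT DE]
      exact hne
    · exact MeasureTheory.ae_of_all _ fun DE hT' => absurd hT' hT
  filter_upwards [hae] with DE hDE x₀ y₀ hsx₀ hx₀ hy₀ x y hsx hconv
  set T : Finset (Fin m₁) := (Finset.univ.filter fun p => x p ≠ 0) ∪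
    (Finset.univ.filter fun p => x₀ p ≠ 0) with hTdef
  have hc1 : (Finset.univ.filter fun p => x p ≠ 0).card = sparsity x := by
    rw [sparsity]
    have hs : {j | x j ≠ 0} = ↑(Finset.univ.filter fun p => x p ≠ 0) := by ext j; simp
    rw [hs, Set.ncard_coe_finset]
  have hc2 : (Finset.univ.filter fun p => x₀ p ≠ 0).card = sparsity x₀ := by
    rw [sparsity]
    have hs : {j | x₀ j ≠ 0} = ↑(Finset.univ.filter fun p => x₀ p ≠ 0) := by ext j; simp
    rw [hs, Set.ncard_coe_finset]
  have hTcard : T.card * m₂ ≤ n := by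
    have hu := Finset.card_union_le (Finset.univ.filter fun p => x p ≠ 0)
      (Finset.univ.filter fun p => x₀ p ≠ 0)
    rw [hc1, hc2] at hu
    have h2 : T.card ≤ 2 * s₁ := by rw [hTdef]; omega
    calc T.card * m₂ ≤ (2 * s₁) * m₂ := Nat.mul_le_mul_right _ h2
      _ ≤ n := h
  have hGood := hDE T hTcard
  set M : Fin m₁ → Fin m₂ → ℂ := fun p q => x p * y q - x₀ p * y₀ q with hM
  have hM0 : ∀ p, p ∉ T → ∀ q, M p q = 0 := by
    intro p hp q
    simp only [hTdef, Finset.mem_union, Finset.mem_filter, Finset.mem_univ, true_and,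
      not_or, not_not] at hp
    simp [hM, hp.1, hp.2]
  have hsum : ∀ i, ∑ p, ∑ q, gker DE i p q * M p q = 0 := by
    intro i
    have hc := congrFun hconv i
    rw [conv_expand, conv_expand] at hc
    simp only [hM, mul_sub]
    simp only [Finset.sum_sub_distrib]
    rw [hc, sub_self]
  have hM0' := hGood M hM0 hsum
  have hkey : ∀ p q, x p * y q = x₀ p * y₀ q := by
    intro p q
    have := congrFun (congrFun hM0' p) q
    simpa [hM, sub_eq_zero] using this
  obtain ⟨jy, hjy⟩ : ∃ j, y₀ j ≠ 0 := by
    by_contra hcon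
    push_neg at hcon
    exact hy₀ (funext fun j => hcon j)
  obtain ⟨ix, hix⟩ : ∃ i, x₀ i ≠ 0 := by
    by_contra hcon
    push_neg at hcon
    exact hx₀ (funext fun i => hcon i)
  have h1 : x ix * y jy = x₀ ix * y₀ jy := hkey ix jy
  have hne : x ix * y jy ≠ 0 := by
    rw [h1]; exact mul_ne_zero hix hjy
  have hyj : y jy ≠ 0 := right_ne_zero_of_mul hne
  set σ : ℂ := y₀ jy / y jy with hσdef
  have hσ : σ ≠ 0 := div_ne_zero hjy hyj
  have hx : x = σ • x₀ := by
    funext p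
    have hk := hkey p jy
    show x p = σ * x₀ p
    rw [hσdef]
    field_simp
    linear_combination hk
  have hy : y = σ⁻¹ • y₀ := by
    funext q
    have hk := hkey ix q
    have hxix : x ix = σ * x₀ ix := by rw [hx]; rfl
    rw [hxix] at hk
    show y q = σ⁻¹ * y₀ q
    have hcancel : σ * y q = y₀ q := by
      have := mul_left_cancel₀ hix (show x₀ ix * (σ * y q) = x₀ ix * y₀ q by
        linear_combination hk)
      exact this
    rw [← hcancel, ← mul_assoc, inv_mul_cancel₀ hσ, one_mul]
  exact ⟨σ, hσ, hx, hy⟩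
end

section
/- In blind deconvolution with sparsity constraints on both factors: if n ≥ 2s₁s₂, then for almost all D ∈ ℂ^{n×m₁} and E ∈ ℂ^{n×m₂}, every pair (x₀,y₀) with ‖x₀‖₀ ≤ s₁, ‖y₀‖₀ ≤ s₂, x₀ ≠ 0, y₀ ≠ 0 is identifiable up to scaling: any (x,y) with ‖x‖₀ ≤ s₁, ‖y‖₀ ≤ s₂ and (Dx) ⊛ (Ey) = (Dx₀) ⊛ (Ey₀) satisfies x = σx₀, y = σ^{-1}y₀ for some nonzero σ ∈ ℂ. -/
/-!
By bilinearity, `(D x) ⊛ (E y) = C(D, E) (x ⊗ y)`, where the column `(p, q)` of `C(D, E)` is the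
circular convolution of column `p` of `D` with column `q` of `E`. If any `n` columns of
`C(D, E)` are linearly independent, then for sparse pairs with equal convolutions the difference
`x ⊗ y - x₀ ⊗ y₀` has at most `2 s₁ s₂ ≤ n` nonzero entries and lies in the kernel, so
`x ⊗ y = x₀ ⊗ y₀`, which pins down `(x, y)` up to the scaling `(σ x₀, σ⁻¹ y₀)`.

Independence of the columns indexed by a fixed set `Ω` can only fail on the zero set of one
polynomial in the entries of `(D, E)`: a minor of `F C(D, E)`, with `F` the DFT matrix. By the
convolution theorem `F C(D, E)` is the face-splitting product of `F D` and `F E`, and choosing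
`F D`, `F E` with rows of powers of distinct nodes turns the minor into a nonzero Vandermonde
determinant. The zero set of a nonzero polynomial is Lebesgue-null (induction on the variables
and Fubini), and there are only finitely many `Ω`.
-/

open MeasureTheory

open scoped Matrix

def faceSplit {R ι κ₁ κ₂ : Type*} [Mul R] (A : Matrix ι κ₁ R) (B : Matrix ι κ₂ R) :
    Matrix ι (κ₁ × κ₂) R :=
  Matrix.of fun i pq => A i pq.1 * B i pq.2

theorem faceSplit_map {R S ι κ₁ κ₂ : Type*} [NonAssocSemiring R] [NonAssocSemiring S]
    (f : R →+* S) (A : Matrix ι κ₁ R) (B : Matrix ι κ₂ R) :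
    (faceSplit A B).map f = faceSplit (A.map f) (B.map f) := by
  ext i pq
  simp [faceSplit]

noncomputable def columnMinor {R κ : Type*} {n : ℕ} (Ω : Finset κ) (hΩ : Ω.card ≤ n)
    (M : Matrix (Fin n) κ R) : Matrix (Fin Ω.card) (Fin Ω.card) R :=
  M.submatrix (Fin.castLE hΩ) fun j => Ω.equivFin.symm j

theorem columnMinor_map {R S κ : Type*} {n : ℕ} (Ω : Finset κ) (hΩ : Ω.card ≤ n)
    (M : Matrix (Fin n) κ R) (f : R → S) :
    (columnMinor Ω hΩ M).map f = columnMinor Ω hΩ (M.map f) :=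
  rfl

theorem eq_zero_of_det_columnMinor_ne_zero {R κ : Type*} [Fintype κ] [CommRing R]
    [NoZeroDivisors R] {n : ℕ} {Ω : Finset κ} {hΩ : Ω.card ≤ n} {M : Matrix (Fin n) κ R}
    (hdet : (columnMinor Ω hΩ M).det ≠ 0) {v : κ → R} (hv : ∀ c ∉ Ω, v c = 0)
    (hMv : M *ᵥ v = 0) : v = 0 := by
  have hsum : ∀ i, ∑ j, M i (Ω.equivFin.symm j) * v (Ω.equivFin.symm j) = (M *ᵥ v) i := by
    intro i
    rw [Fintype.sum_equiv Ω.equivFin.symm _ (fun c : Ω => M i c * v c) (fun _ => rfl),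
      Finset.sum_coe_sort Ω (fun c => M i c * v c), Matrix.mulVec, dotProduct,
      Finset.sum_subset (Finset.subset_univ Ω) fun c _ hc => by rw [hv c hc, mul_zero]]
  have hw : (fun j => v (Ω.equivFin.symm j)) = 0 :=
    Matrix.eq_zero_of_mulVec_eq_zero hdet <| funext fun k =>
      (hsum (Fin.castLE hΩ k)).trans (congrFun hMv _)
  funext c
  by_cases hc : c ∈ Ω
  · simpa using congrFun hw (Ω.equivFin ⟨c, hc⟩)
  · exact hv c hc

theorem pow_val_add_of_pow_eq_one {M : Type*} [Monoid M] {n : ℕ} {z : M} (hz : z ^ n = 1)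
    (i j : Fin n) :
    z ^ (i + j : Fin n).val = z ^ i.val * z ^ j.val := by
  rw [Fin.val_add, ← pow_eq_pow_mod _ hz, pow_add]

theorem sum_pow_mul_cconv {n : ℕ} {z : ℂ} (hz : z ^ n = 1) (u v : Fin n → ℂ) :
    ∑ i, z ^ i.val * cconv u v i = (∑ i, z ^ i.val * u i) * ∑ i, z ^ i.val * v i := by
  cases n with
  | zero => simp
  | succ n => ?_
  rw [Finset.sum_mul_sum]
  simp only [cconv, Finset.mul_sum]
  rw [Finset.sum_comm]
  refine Finset.sum_congr rfl fun j _ => ?_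
  refine (Fintype.sum_equiv (Equiv.addRight j) _ _ fun l => ?_).symm
  rw [Equiv.coe_addRight, pow_val_add_of_pow_eq_one hz, add_sub_cancel_right]
  ring

noncomputable def dftMatrix {R : Type*} [CommRing R] (n : ℕ) (ω : R) : Matrix (Fin n) (Fin n) R :=
  Matrix.vandermonde fun k : Fin n => ω ^ k.val

theorem det_dftMatrix_ne_zero {R : Type*} [CommRing R] [IsDomain R] {n : ℕ} {ω : R}
    (hω : IsPrimitiveRoot ω n) : (dftMatrix n ω).det ≠ 0 :=
  Matrix.det_vandermonde_ne_zero_iff.2 fun k l h => Fin.ext (hω.pow_inj k.isLt l.isLt h)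

noncomputable def convMatrix {n m₁ m₂ : ℕ} (D : Fin n → Fin m₁ → ℂ) (E : Fin n → Fin m₂ → ℂ) :
    Matrix (Fin n) (Fin m₁ × Fin m₂) ℂ :=
  Matrix.of fun i pq => cconv (fun j => D j pq.1) (fun j => E j pq.2) i

theorem cconv_mulVecF {n m₁ m₂ : ℕ} (D : Fin n → Fin m₁ → ℂ) (E : Fin n → Fin m₂ → ℂ)
    (x : Fin m₁ → ℂ) (y : Fin m₂ → ℂ) :
    cconv (mulVecF D x) (mulVecF E y) = convMatrix D E *ᵥ fun pq => x pq.1 * y pq.2 := by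
  funext i
  simp only [cconv, mulVecF, convMatrix, Matrix.mulVec, dotProduct, Matrix.of_apply,
    Fintype.sum_prod_type, Finset.sum_mul_sum]
  simp only [Finset.sum_mul]
  conv_rhs => enter [2, p]; rw [Finset.sum_comm]
  rw [Finset.sum_comm (s := Finset.univ (α := Fin m₁))]
  exact Finset.sum_congr rfl fun j _ => Finset.sum_congr rfl fun p _ =>
    Finset.sum_congr rfl fun q _ => by ring

theorem dftMatrix_mul_convMatrix {n m₁ m₂ : ℕ} {ω : ℂ} (hω : ω ^ n = 1)
    (D : Fin n → Fin m₁ → ℂ) (E : Fin n → Fin m₂ → ℂ) :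
    dftMatrix n ω * convMatrix D E =
      faceSplit (dftMatrix n ω * Matrix.of D) (dftMatrix n ω * Matrix.of E) := by
  ext k pq
  have hz : (ω ^ k.val) ^ n = 1 := by rw [← pow_mul, mul_comm, pow_mul, hω, one_pow]
  simp only [Matrix.mul_apply, dftMatrix, Matrix.vandermonde_apply, faceSplit, Matrix.of_apply,
    convMatrix]
  exact sum_pow_mul_cconv hz _ _

theorem exists_det_columnMinor_faceSplit_ne_zero {n m₁ m₂ : ℕ} {ω : ℂ} (hω : IsPrimitiveRoot ω n)
    (Ω : Finset (Fin m₁ × Fin m₂)) (hΩ : Ω.card ≤ n) :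
    ∃ (D : Matrix (Fin n) (Fin m₁) ℂ) (E : Matrix (Fin n) (Fin m₂) ℂ),
      (columnMinor Ω hΩ (faceSplit (dftMatrix n ω * D) (dftMatrix n ω * E))).det ≠ 0 := by
  have hF : IsUnit (dftMatrix n ω).det := isUnit_iff_ne_zero.2 (det_dftMatrix_ne_zero hω)
  let A : Matrix (Fin n) (Fin m₁) ℂ := Matrix.of fun k p => ((2 ^ (m₂ * p.val) : ℕ) : ℂ) ^ k.val
  let B : Matrix (Fin n) (Fin m₂) ℂ := Matrix.of fun k q => ((2 ^ q.val : ℕ) : ℂ) ^ k.val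
  let node : Fin m₁ × Fin m₂ → ℂ := fun pq => ((2 ^ (finProdFinEquiv pq).val : ℕ) : ℂ)
  refine ⟨(dftMatrix n ω)⁻¹ * A, (dftMatrix n ω)⁻¹ * B, ?_⟩
  have hminor : columnMinor Ω hΩ (faceSplit A B) =
      (Matrix.vandermonde fun j => node (Ω.equivFin.symm j))ᵀ := by
    ext k j
    simp [columnMinor, faceSplit, A, B, node, Matrix.vandermonde_apply, ← mul_pow, ← pow_add,
      add_comm]
  have hnode : Function.Injective node :=
    Nat.cast_injective.comp <| (Nat.pow_right_injective le_rfl).comp <|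
      Fin.val_injective.comp finProdFinEquiv.injective
  rw [Matrix.mul_nonsing_inv_cancel_left _ _ hF, Matrix.mul_nonsing_inv_cancel_left _ _ hF,
    hminor, Matrix.det_transpose, Matrix.det_vandermonde_ne_zero_iff]
  exact hnode.comp (Subtype.val_injective.comp Ω.equivFin.symm.injective)

universe u

namespace MvPolynomial

theorem measurable_eval {R σ : Type*} [CommSemiring R] [MeasurableSpace R] [MeasurableAdd₂ R]
    [MeasurableMul₂ R] (p : MvPolynomial σ R) : Measurable fun x : σ → R => eval x p := by
  induction p using MvPolynomial.induction_on with
  | C c => simp only [eval_C]; exact measurable_const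
  | add p q hp hq => simp only [map_add]; exact hp.add hq
  | mul_X p i hp => simp only [map_mul, eval_X]; exact hp.mul (measurable_pi_apply i)

theorem ae_eval_ne_zero {R : Type*} [CommRing R] [IsDomain R] [MeasurableSpace R]
    [MeasurableSingletonClass R] [MeasurableAdd₂ R] [MeasurableMul₂ R] (μ : Measure R)
    [SigmaFinite μ] [NullSingletonClass μ] {σ : Type u} [Fintype σ] {p : MvPolynomial σ R}
    (hp : p ≠ 0) :
    ∀ᵐ x ∂Measure.pi fun _ : σ => μ, eval x p ≠ 0 := by
  suffices ∀ p : MvPolynomial σ R, p ≠ 0 → ∀ᵐ x ∂Measure.pi fun _ : σ => μ, eval x p ≠ 0 from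
    this p hp
  refine Fintype.induction_empty_option (P := fun α _ => ∀ p : MvPolynomial α R, p ≠ 0 →
    ∀ᵐ x ∂Measure.pi fun _ : α => μ, eval x p ≠ 0) ?_ ?_ ?_ σ
  · intro α β _ e ih p hp
    let := Fintype.ofEquiv β e.symm
    have hq : rename e.symm p ≠ 0 := fun h =>
      hp (rename_injective _ e.symm.injective (by rw [h, map_zero]))
    rw [← Measure.pi_map_piCongrLeft e,
      (MeasurableEquiv.piCongrLeft _ e).measurableEmbedding.ae_map_iff]
    filter_upwards [ih _ hq] with x hx
    convert hx using 1
    rw [eval_rename]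
    congr 2
    funext b
    simp [MeasurableEquiv.piCongrLeft, Equiv.piCongrLeft_apply_eq_cast]
  · intro p hp
    obtain ⟨c, rfl⟩ := C_surjective PEmpty p
    exact ae_of_all _ fun x => by simpa using hp
  · intro α _ ih p hp
    set q := optionEquivLeft R α p
    have hq : q ≠ 0 := by simpa [q] using hp
    obtain ⟨k, hk⟩ : ∃ k, q.coeff k ≠ 0 := by
      by_contra! h
      exact hq (Polynomial.ext h)
    let e := (MeasurableEquiv.piOptionEquivProd fun _ : Option α => R).symm
    have hmeas : MeasurableSet {z | eval (e z) p ≠ 0} :=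
      (((measurable_eval p).comp e.measurable) (measurableSet_singleton 0)).compl
    rw [← Measure.pi_map_piOptionEquivProd (fun _ => μ), e.measurableEmbedding.ae_map_iff,
      Measure.ae_prod_iff_ae_ae hmeas]
    -- For a.e. `s` the coefficient `q.coeff k` does not vanish at `s`, so the section over `s`
    -- is the root set of a nonzero univariate polynomial, which is finite.
    filter_upwards [ih _ hk] with s hs
    have hqs : q.map (eval s) ≠ 0 := fun h =>
      hs (by simpa using congrArg (Polynomial.coeff · k) h)
    filter_upwards [(Polynomial.finite_setOfPred_isRoot hqs).countable.ae_notMem μ] with y hy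
    have he : e (s, y) = fun o => o.elim y s := by
      funext o; cases o <;> rfl
    rwa [he, optionEquivLeft_elim_eval]

end MvPolynomial

theorem measurePreserving_curry {ι κ X : Type*} [Fintype ι] [Fintype κ] [MeasurableSpace X]
    (μ : Measure X) [SigmaFinite μ] :
    MeasurePreserving (MeasurableEquiv.curry ι κ X) (Measure.pi fun _ => μ)
      (Measure.pi fun _ => Measure.pi fun _ => μ) := by
  refine MeasurePreserving.symm _ ⟨(MeasurableEquiv.curry ι κ X).symm.measurable, ?_⟩
  refine (Measure.pi_eq fun s hs => ?_).symm
  rw [(MeasurableEquiv.curry ι κ X).symm.measurableEmbedding.map_apply]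
  have : (MeasurableEquiv.curry ι κ X).symm ⁻¹' Set.univ.pi s =
      Set.univ.pi fun i => Set.univ.pi fun j => s (i, j) := by
    ext f; simp [MeasurableEquiv.coe_curry_symm]
  simp [this, Measure.pi_pi, Fintype.prod_prod_type]

theorem measurePreserving_sumElim_uncurry {ι κ₁ κ₂ X : Type*} [Fintype ι] [Fintype κ₁]
    [Fintype κ₂] [MeasurableSpace X] (μ : Measure X) [SigmaFinite μ] :
    MeasurePreserving (fun DE : (ι → κ₁ → X) × (ι → κ₂ → X) =>
        Sum.elim (Function.uncurry DE.1) (Function.uncurry DE.2))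
      ((Measure.pi fun _ => Measure.pi fun _ => μ).prod
        (Measure.pi fun _ => Measure.pi fun _ => μ))
      (Measure.pi fun _ => μ) := by
  have := (measurePreserving_sumPiEquivProdPi_symm fun _ : (ι × κ₁) ⊕ (ι × κ₂) => μ).comp
    (((measurePreserving_curry μ).symm _).prod ((measurePreserving_curry μ).symm _))
  convert this using 1
  funext DE x
  cases x <;> rfl

theorem ae_det_columnMinor_faceSplit_ne_zero {n m₁ m₂ : ℕ} {ω : ℂ} (hω : IsPrimitiveRoot ω n)
    (Ω : Finset (Fin m₁ × Fin m₂)) (hΩ : Ω.card ≤ n) :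
    ∀ᵐ DE : (Fin n → Fin m₁ → ℂ) × (Fin n → Fin m₂ → ℂ), (columnMinor Ω hΩ
      (faceSplit (dftMatrix n ω * Matrix.of DE.1) (dftMatrix n ω * Matrix.of DE.2))).det ≠ 0 := by
  let P := MvPolynomial ((Fin n × Fin m₁) ⊕ (Fin n × Fin m₂)) ℂ
  let F : Matrix (Fin n) (Fin n) P := (dftMatrix n ω).map MvPolynomial.C
  let X₁ : Matrix (Fin n) (Fin m₁) P := Matrix.of fun i p => MvPolynomial.X (.inl (i, p))
  let X₂ : Matrix (Fin n) (Fin m₂) P := Matrix.of fun i q => MvPolynomial.X (.inr (i, q))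
  let Q := (columnMinor Ω hΩ (faceSplit (F * X₁) (F * X₂))).det
  have heval : ∀ (D : Fin n → Fin m₁ → ℂ) (E : Fin n → Fin m₂ → ℂ),
      MvPolynomial.eval (Sum.elim (Function.uncurry D) (Function.uncurry E)) Q =
        (columnMinor Ω hΩ
          (faceSplit (dftMatrix n ω * Matrix.of D) (dftMatrix n ω * Matrix.of E))).det := by
    intro D E
    rw [RingHom.map_det, RingHom.mapMatrix_apply, columnMinor_map, faceSplit_map,
      Matrix.map_mul, Matrix.map_mul, Matrix.map_map]
    congr <;> ext <;> simp [X₁, X₂]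
  obtain ⟨D₀, E₀, h₀⟩ := exists_det_columnMinor_faceSplit_ne_zero hω Ω hΩ
  have hQ : Q ≠ 0 := fun h => h₀ <| (heval D₀ E₀).symm.trans (by rw [h, map_zero])
  filter_upwards [(measurePreserving_sumElim_uncurry volume).quasiMeasurePreserving.ae
    (MvPolynomial.ae_eval_ne_zero volume hQ)] with DE h
  rwa [heval] at h

theorem ae_forall_eq_zero_of_convMatrix_mulVec_eq_zero (n m₁ m₂ : ℕ) :
    ∀ᵐ DE : (Fin n → Fin m₁ → ℂ) × (Fin n → Fin m₂ → ℂ), ∀ v : Fin m₁ × Fin m₂ → ℂ,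
      (Function.support v).ncard ≤ n → convMatrix DE.1 DE.2 *ᵥ v = 0 → v = 0 := by
  rcases n.eq_zero_or_pos with rfl | hn
  · exact ae_of_all _ fun DE v hv _ => Function.support_eq_empty_iff.1 <|
      (Set.ncard_eq_zero (Set.toFinite _)).1 (Nat.le_zero.1 hv)
  obtain ⟨ω, hω⟩ : ∃ ω : ℂ, IsPrimitiveRoot ω n := ⟨_, Complex.isPrimitiveRoot_exp n hn.ne'⟩
  have hgood : ∀ᵐ DE : (Fin n → Fin m₁ → ℂ) × (Fin n → Fin m₂ → ℂ),
      ∀ (Ω : Finset (Fin m₁ × Fin m₂)) (hΩ : Ω.card ≤ n), (columnMinor Ω hΩ (faceSplit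
        (dftMatrix n ω * Matrix.of DE.1) (dftMatrix n ω * Matrix.of DE.2))).det ≠ 0 := by
    refine ae_all_iff.2 fun Ω => ?_
    by_cases hΩ : Ω.card ≤ n
    · filter_upwards [ae_det_columnMinor_faceSplit_ne_zero hω Ω hΩ] with DE h _ using h
    · exact ae_of_all _ fun _ h => absurd h hΩ
  filter_upwards [hgood] with DE hdet v hv hMv
  have hfin := (Function.support v).toFinite
  refine eq_zero_of_det_columnMinor_ne_zero
    (hdet hfin.toFinset (hv.trans_eq' (Set.ncard_eq_toFinset_card _ hfin)))
    (fun c hc => by simpa using hc) ?_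
  rw [← dftMatrix_mul_convMatrix hω.pow_eq_one, ← Matrix.mulVec_mulVec, hMv, Matrix.mulVec_zero]

theorem exists_smul_of_mul_eq_mul {ι κ K : Type*} [Field K] {x x₀ : ι → K} {y y₀ : κ → K}
    (hx₀ : x₀ ≠ 0) (hy₀ : y₀ ≠ 0) (h : ∀ p q, x p * y q = x₀ p * y₀ q) :
    ∃ σ : K, σ ≠ 0 ∧ x = σ • x₀ ∧ y = σ⁻¹ • y₀ := by
  obtain ⟨p₀, hp₀⟩ := Function.ne_iff.1 hx₀
  obtain ⟨q₀, hq₀⟩ := Function.ne_iff.1 hy₀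
  have hxy : x p₀ * y q₀ ≠ 0 := by rw [h]; exact mul_ne_zero hp₀ hq₀
  have hxp₀ := left_ne_zero_of_mul hxy
  have hyq₀ := right_ne_zero_of_mul hxy
  refine ⟨x p₀ / x₀ p₀, div_ne_zero hxp₀ hp₀, funext fun p => ?_, funext fun q => ?_⟩
  · rw [Pi.smul_apply, smul_eq_mul, div_mul_eq_mul_div, eq_div_iff hp₀]
    refine mul_right_cancel₀ hyq₀ ?_
    linear_combination x₀ p₀ * h p q₀ - x₀ p * h p₀ q₀
  · rw [Pi.smul_apply, smul_eq_mul, inv_div, div_mul_eq_mul_div, eq_div_iff hxp₀]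
    linear_combination h p₀ q

theorem ncard_support_mul_sub_mul_le {ι κ R : Type*} [Finite ι] [Finite κ] [Ring R] (x x₀ : ι → R)
    (y y₀ : κ → R) :
    (Function.support fun pq : ι × κ => x pq.1 * y pq.2 - x₀ pq.1 * y₀ pq.2).ncard ≤
      (Function.support x).ncard * (Function.support y).ncard +
        (Function.support x₀).ncard * (Function.support y₀).ncard := by
  calc _ ≤ (Function.support x ×ˢ Function.support y ∪
        Function.support x₀ ×ˢ Function.support y₀).ncard := by
        refine Set.ncard_le_ncard (fun pq hpq => ?_)
        by_contra hc
        simp only [Set.mem_union, Set.mem_prod, Function.mem_support, not_or, not_and_or,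
          not_not] at hc
        apply hpq
        rcases hc with ⟨h | h, h' | h'⟩ <;> simp [h, h']
    _ ≤ _ := by
        refine (Set.ncard_union_le _ _).trans ?_
        rw [Set.ncard_prod, Set.ncard_prod]

/-- Theorem 3.6 (sparsity constraints): if `n ≥ 2s₁s₂`, then for almost all `D, E`, every
`(x₀,y₀)` with `‖x₀‖₀ ≤ s₁`, `‖y₀‖₀ ≤ s₂`, `x₀ ≠ 0`, `y₀ ≠ 0` is identifiable up to scaling
among pairs `(x,y)` with `‖x‖₀ ≤ s₁`, `‖y‖₀ ≤ s₂`. -/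
theorem blind_deconv_sparse_identifiability {n m₁ m₂ s₁ s₂ : ℕ} (h : 2 * s₁ * s₂ ≤ n) :
    ∀ᵐ DE : (Fin n → Fin m₁ → ℂ) × (Fin n → Fin m₂ → ℂ) ∂volume,
      ∀ x₀ : Fin m₁ → ℂ, ∀ y₀ : Fin m₂ → ℂ,
        sparsity x₀ ≤ s₁ → sparsity y₀ ≤ s₂ → x₀ ≠ 0 → y₀ ≠ 0 →
        ∀ x : Fin m₁ → ℂ, ∀ y : Fin m₂ → ℂ, sparsity x ≤ s₁ → sparsity y ≤ s₂ →
          cconv (mulVecF DE.1 x) (mulVecF DE.2 y) =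
            cconv (mulVecF DE.1 x₀) (mulVecF DE.2 y₀) →
          ∃ σ : ℂ, σ ≠ 0 ∧ x = σ • x₀ ∧ y = σ⁻¹ • y₀ := by
  filter_upwards [ae_forall_eq_zero_of_convMatrix_mulVec_eq_zero n m₁ m₂] with DE hDE
  intro x₀ y₀ hx₀ hy₀ hx₀0 hy₀0 x y hx hy hconv
  refine exists_smul_of_mul_eq_mul hx₀0 hy₀0 fun p q =>
    sub_eq_zero.1 (congrFun (hDE (fun pq => x pq.1 * y pq.2 - x₀ pq.1 * y₀ pq.2) ?_ ?_) (p, q))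
  · calc _ ≤ sparsity x * sparsity y + sparsity x₀ * sparsity y₀ :=
          ncard_support_mul_sub_mul_le x x₀ y y₀
      _ ≤ s₁ * s₂ + s₁ * s₂ := add_le_add (Nat.mul_le_mul hx hy) (Nat.mul_le_mul hx₀ hy₀)
      _ ≤ n := by linarith
  · change convMatrix DE.1 DE.2 *ᵥ
      ((fun pq => x pq.1 * y pq.2) - fun pq => x₀ pq.1 * y₀ pq.2) = 0
    rw [Matrix.mulVec_sub, ← cconv_mulVecF, ← cconv_mulVecF, hconv, sub_self]
end

section
/- (Necessity of n ≥ m₁ + m₂ − 1.) Let E ∈ ℂ^{n×m₂} form a sub-band structured basis whose supports J_k (of the columns of Ẽ = F_nE) are pairwise disjoint and cover {1,…,n}. Let D ∈ ℂ^{n×m₁} have full column rank m₁, x₀ ∈ ℂ^{m₁} nonzero, and y₀ ∈ ℂ^{m₂} non-vanishing. If (x₀,y₀) is identifiable up to scaling (every (x,y) with (Dx) ⊛ (Ey) = (Dx₀) ⊛ (Ey₀) satisfies x = σx₀, y = σ^{-1}y₀ for some σ ≠ 0), then n ≥ m₁ + m₂ − 1. -/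
/-- The normalized DFT matrix, `(F_n)_{jk} = n^{-1/2} e^{-2πi jk/n}`. -/
noncomputable def dft (n : ℕ) : Fin n → Fin n → ℂ :=
  fun j k => ((Real.sqrt n : ℝ) : ℂ)⁻¹ *
    Complex.exp (-(2 * (Real.pi : ℂ) * Complex.I * ((j : ℕ) : ℂ) * ((k : ℕ) : ℂ)) / (n : ℂ))

/-- `J_k`: support of the `k`-th column of `Ẽ = F_nE`. -/
noncomputable def subbandSupport {n m₂ : ℕ} (E : Fin n → Fin m₂ → ℂ) (k : Fin m₂) :
    Set (Fin n) :=
  {i | mulVecF (dft n) (fun r => E r k) i ≠ 0}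

open Complex Matrix Module

section LinearAlgebra

variable {K V W U : Type*} [Field K] [AddCommGroup V] [Module K V] [AddCommGroup W] [Module K W]
  [AddCommGroup U] [Module K U] [FiniteDimensional K W] [FiniteDimensional K U]

theorem finrank_add_finrank_le_finrank_add_finrank_comap {A : V →ₗ[K] W}
    (hA : Function.Injective A) (T : U →ₗ[K] W) :
    finrank K V + finrank K U ≤ finrank K W + finrank K ((LinearMap.range A).comap T) := by
  have hker : LinearMap.ker ((LinearMap.range A).mkQ ∘ₗ T) = (LinearMap.range A).comap T := by
    rw [LinearMap.ker_comp, Submodule.ker_mkQ]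
  have hnullity := LinearMap.finrank_range_add_finrank_ker ((LinearMap.range A).mkQ ∘ₗ T)
  have hquot := (LinearMap.range A).finrank_quotient_add_finrank
  have hrange := Submodule.finrank_le (LinearMap.range ((LinearMap.range A).mkQ ∘ₗ T))
  rw [hker] at hnullity
  rw [LinearMap.finrank_range_of_inj hA] at hquot
  omega

end LinearAlgebra

section ConstantVectors

variable {K ι : Type*} [Field K] {S : Submodule K (ι → K)}

theorem Submodule.exists_apply_ne_of_one_lt_finrank (hS : 1 < finrank K S) :
    ∃ u ∈ S, ∃ i j, u i ≠ u j := by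
  obtain ⟨v, -, hv⟩ := S.exists_mem_ne_zero_of_ne_bot (by rintro rfl; simp at hS)
  obtain ⟨i₀, -⟩ := Function.ne_iff.mp hv
  by_contra! hconst
  have hle : S ≤ K ∙ (1 : ι → K) := fun u hu =>
    Submodule.mem_span_singleton.mpr ⟨u i₀, funext fun j => by simp [hconst u hu i₀ j]⟩
  have := (Submodule.finrank_mono hle).trans (finrank_span_le_card ({1} : Set (ι → K)))
  simp only [Set.toFinset_singleton, Finset.card_singleton] at this
  omega

theorem Submodule.exists_forall_ne_zero_apply_ne [Infinite K] [Finite ι]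
    (h1 : (1 : ι → K) ∈ S) {u : ι → K} (hu : u ∈ S) {i j : ι} (hij : u i ≠ u j) :
    ∃ t ∈ S, (∀ k, t k ≠ 0) ∧ t i ≠ t j := by
  obtain ⟨ε, hε⟩ := ((Set.finite_range fun k => -(u k)⁻¹).insert 0).exists_notMem
  simp only [Set.mem_insert_iff, Set.mem_range, not_or, not_exists] at hε
  refine ⟨1 + ε • u, add_mem h1 (S.smul_mem ε hu), fun k hk => ?_, fun h => ?_⟩
  · have hεu : 1 + ε * u k = 0 := by simpa using hk
    have huk : u k ≠ 0 := by rintro h; simp [h] at hεu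
    refine hε.2 k ?_
    field_simp
    linear_combination -hεu
  · exact hij (mul_left_cancel₀ hε.1 (by simpa using h))

theorem Submodule.finrank_le_one_of_forall_ne_zero_const [Infinite K] [Finite ι]
    (h1 : (1 : ι → K) ∈ S) (hS : ∀ t ∈ S, (∀ k, t k ≠ 0) → ∀ i j, t i = t j) :
    finrank K S ≤ 1 := by
  by_contra! hlt
  obtain ⟨u, hu, i, j, hij⟩ := exists_apply_ne_of_one_lt_finrank hlt
  obtain ⟨t, ht, ht0, htij⟩ := exists_forall_ne_zero_apply_ne h1 hu hij
  exact htij (hS t ht ht0 i j)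

end ConstantVectors

noncomputable def dftRoot (n : ℕ) : ℂ := exp (-(2 * (Real.pi : ℂ) * I) / n)

noncomputable def dftVandermonde (n : ℕ) : Matrix (Fin n) (Fin n) ℂ :=
  vandermonde fun j : Fin n => dftRoot n ^ (j : ℕ)

theorem isPrimitiveRoot_dftRoot {n : ℕ} (hn : n ≠ 0) : IsPrimitiveRoot (dftRoot n) n := by
  simpa [dftRoot, neg_div, Complex.exp_neg] using (Complex.isPrimitiveRoot_exp n hn).inv

theorem dftRoot_pow_self (n : ℕ) : dftRoot n ^ n = 1 := by
  obtain rfl | hn := eq_or_ne n 0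
  · exact pow_zero _
  · exact (isPrimitiveRoot_dftRoot hn).pow_eq_one

theorem of_dft_eq_smul (n : ℕ) :
    Matrix.of (dft n) = ((Real.sqrt n : ℝ) : ℂ)⁻¹ • dftVandermonde n := by
  ext j k
  rw [of_apply, dft, Matrix.smul_apply, dftVandermonde, vandermonde_apply, dftRoot, ← pow_mul,
    ← Complex.exp_nat_mul, smul_eq_mul]
  congr 2
  push_cast
  ring

theorem pow_val_add_of_pow_eq_one_s16 {M : Type*} [Monoid M] {n : ℕ} {x : M} (hx : x ^ n = 1)
    (a b : Fin n) :
    x ^ ((a + b : Fin n) : ℕ) = x ^ (a : ℕ) * x ^ (b : ℕ) := by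
  rw [Fin.val_add, ← pow_eq_pow_mod _ hx, pow_add]

theorem vandermonde_pow_mulVec_cconv {n : ℕ} {ζ : ℂ} (hζ : ζ ^ n = 1) (u v : Fin n → ℂ) :
    vandermonde (fun j : Fin n => ζ ^ (j : ℕ)) *ᵥ cconv u v =
      (vandermonde (fun j : Fin n => ζ ^ (j : ℕ)) *ᵥ u) *
        (vandermonde (fun j : Fin n => ζ ^ (j : ℕ)) *ᵥ v) := by
  funext j
  have : NeZero n := NeZero.of_pos j.pos
  have hx : (ζ ^ (j : ℕ)) ^ n = 1 := by rw [← pow_mul, mul_comm, pow_mul, hζ, one_pow]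
  simp only [mulVec, dotProduct, vandermonde_apply, cconv, Pi.mul_apply]
  rw [Finset.sum_mul_sum]
  simp only [Finset.mul_sum]
  rw [Finset.sum_comm]
  refine Finset.sum_congr rfl fun l _ => ?_
  refine Fintype.sum_equiv (Equiv.subRight l) _ _ fun i => ?_
  have hsplit := pow_val_add_of_pow_eq_one_s16 hx (i - l) l
  rw [sub_add_cancel] at hsplit
  rw [Equiv.subRight_apply, hsplit]
  ring

theorem vandermonde_pow_mulVec_injective {R : Type*} [Field R] {n : ℕ} {ζ : R}
    (hζ : IsPrimitiveRoot ζ n) :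
    Function.Injective (vandermonde fun j : Fin n => ζ ^ (j : ℕ)).mulVec := by
  rw [mulVec_injective_iff_isUnit, isUnit_iff_isUnit_det, isUnit_iff_ne_zero,
    det_vandermonde_ne_zero_iff]
  exact fun i j h => Fin.ext (hζ.pow_inj i.isLt j.isLt h)

theorem dftVandermonde_mulVec_injective (n : ℕ) :
    Function.Injective (dftVandermonde n).mulVec := by
  obtain rfl | hn := eq_or_ne n 0
  · exact Function.injective_of_subsingleton _
  · exact vandermonde_pow_mulVec_injective (isPrimitiveRoot_dftRoot hn)

theorem mem_subbandSupport_iff {n m : ℕ} (E : Fin n → Fin m → ℂ) (k : Fin m) (i : Fin n) :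
    i ∈ subbandSupport E k ↔ (dftVandermonde n * Matrix.of E) i k ≠ 0 := by
  have hn : ((Real.sqrt n : ℝ) : ℂ) ≠ 0 := by
    simpa using (Real.sqrt_pos.mpr (Nat.cast_pos.mpr i.pos)).ne'
  change mulVecF (dft n) (fun r => E r k) i ≠ 0 ↔ _
  rw [show mulVecF (dft n) (fun r => E r k) i = (Matrix.of (dft n) * Matrix.of E) i k from rfl,
    of_dft_eq_smul, smul_mul, Matrix.smul_apply, smul_eq_mul, mul_ne_zero_iff,
    and_iff_right (inv_ne_zero hn)]

theorem dftVandermonde_mulVec_cconv {n : ℕ} (u v : Fin n → ℂ) :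
    dftVandermonde n *ᵥ cconv u v = (dftVandermonde n *ᵥ u) * (dftVandermonde n *ᵥ v) :=
  vandermonde_pow_mulVec_cconv (dftRoot_pow_self n) u v

theorem Matrix.mulVec_apply_of_ne_eq_zero {R ι ι' : Type*} [NonUnitalNonAssocSemiring R]
    [Fintype ι'] {M : Matrix ι ι' R} {i : ι} {k₀ : ι'} (hM : ∀ k, k ≠ k₀ → M i k = 0)
    (y : ι' → R) : (M *ᵥ y) i = M i k₀ * y k₀ :=
  Fintype.sum_eq_single k₀ fun k hk => by simp [hM k hk]

theorem exists_subband_index {n m : ℕ} {E : Fin n → Fin m → ℂ}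
    (hdisj : ∀ k k', k ≠ k' → Disjoint (subbandSupport E k) (subbandSupport E k'))
    (hcover : (⋃ k, subbandSupport E k) = Set.univ) :
    ∃ κ : Fin n → Fin m, ∀ i k, k ≠ κ i → (dftVandermonde n * Matrix.of E) i k = 0 := by
  choose κ hκ using fun i => Set.mem_iUnion.mp (hcover ▸ Set.mem_univ i)
  refine ⟨κ, fun i k hk => ?_⟩
  by_contra h
  exact Set.disjoint_left.mp (hdisj k (κ i) hk) ((mem_subbandSupport_iff E k i).mpr h) (hκ i)

theorem cconv_mulVec_div_eq {n m : ℕ} {E : Matrix (Fin n) (Fin m) ℂ} {κ : Fin n → Fin m}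
    (hκ : ∀ i k, k ≠ κ i → (dftVandermonde n * E) i k = 0) {u u₀ : Fin n → ℂ}
    {t y₀ : Fin m → ℂ} (ht : ∀ k, t k ≠ 0)
    (hu : dftVandermonde n *ᵥ u = (dftVandermonde n *ᵥ u₀) * (t ∘ κ)) :
    cconv u (E *ᵥ (y₀ / t)) = cconv u₀ (E *ᵥ y₀) := by
  apply dftVandermonde_mulVec_injective n
  rw [dftVandermonde_mulVec_cconv, dftVandermonde_mulVec_cconv, mulVec_mulVec, mulVec_mulVec, hu]
  funext i
  have htκ := ht (κ i)
  simp only [Pi.mul_apply, Pi.div_apply, Function.comp_apply,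
    mulVec_apply_of_ne_eq_zero (hκ i)]
  field_simp

theorem subband_identifiability_necessary_general {n m₁ m₂ : ℕ}
    (E : Fin n → Fin m₂ → ℂ)
    (hdisj : ∀ k k', k ≠ k' → Disjoint (subbandSupport E k) (subbandSupport E k'))
    (hcover : (⋃ k, subbandSupport E k) = Set.univ)
    (D : Fin n → Fin m₁ → ℂ)
    (hD : LinearIndependent ℂ (fun j : Fin m₁ => fun i : Fin n => D i j))
    (x₀ : Fin m₁ → ℂ)
    (y₀ : Fin m₂ → ℂ) (hy₀ : ∀ k, y₀ k ≠ 0)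
    (hident : ∀ x : Fin m₁ → ℂ, ∀ y : Fin m₂ → ℂ,
      cconv (mulVecF D x) (mulVecF E y) = cconv (mulVecF D x₀) (mulVecF E y₀) →
      ∃ σ : ℂ, σ ≠ 0 ∧ x = σ • x₀ ∧ y = σ⁻¹ • y₀) :
    m₁ + m₂ - 1 ≤ n := by
  obtain ⟨κ, hκ⟩ := exists_subband_index hdisj hcover
  let A := (dftVandermonde n).mulVecLin ∘ₗ (Matrix.of D).mulVecLin
  have hA : Function.Injective A :=
    (dftVandermonde_mulVec_injective n).comp (Matrix.mulVec_injective_iff.mpr hD)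
  let T := LinearMap.mulLeft ℂ (A x₀) ∘ₗ LinearMap.funLeft ℂ ℂ κ
  let K := (LinearMap.range A).comap T
  have hK1 : (1 : Fin m₂ → ℂ) ∈ K := ⟨x₀, (mul_one (A x₀)).symm⟩
  have hK : ∀ t ∈ K, (∀ k, t k ≠ 0) → ∀ k k', t k = t k' := by
    rintro t ⟨x, hx⟩ ht
    obtain ⟨σ, -, -, hσ⟩ := hident x (y₀ / t) (cconv_mulVec_div_eq hκ ht hx)
    have htσ : ∀ k, t k = σ := fun k => by
      have hk : (t k)⁻¹ * y₀ k = σ⁻¹ * y₀ k := by simpa [div_eq_inv_mul] using congrFun hσ k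
      exact inv_inj.mp (mul_right_cancel₀ (hy₀ k) hk)
    exact fun k k' => (htσ k).trans (htσ k').symm
  have hdim : m₁ + m₂ ≤ n + finrank ℂ K := by
    simpa using finrank_add_finrank_le_finrank_add_finrank_comap hA T
  have hK_le := Submodule.finrank_le_one_of_forall_ne_zero_const hK1 hK
  omega

/-- Proposition 4.4 (necessity of `n ≥ m₁ + m₂ − 1`): if the sub-bands `J_k` of `E` are
nonempty, pairwise disjoint and cover all frequencies, `D` has full column rank, `x₀ ≠ 0`,
`y₀` is non-vanishing, and `(x₀,y₀)` is identifiable up to scaling, then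
`n ≥ m₁ + m₂ − 1`. -/
theorem subband_identifiability_necessary {n m₁ m₂ : ℕ}
    (E : Fin n → Fin m₂ → ℂ)
    (hne : ∀ k, (subbandSupport E k).Nonempty)
    (hdisj : ∀ k k', k ≠ k' → Disjoint (subbandSupport E k) (subbandSupport E k'))
    (hcover : (⋃ k, subbandSupport E k) = Set.univ)
    (D : Fin n → Fin m₁ → ℂ)
    (hD : LinearIndependent ℂ (fun j : Fin m₁ => fun i : Fin n => D i j))
    (x₀ : Fin m₁ → ℂ) (hx₀ : x₀ ≠ 0)
    (y₀ : Fin m₂ → ℂ) (hy₀ : ∀ k, y₀ k ≠ 0)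
    (hident : ∀ x : Fin m₁ → ℂ, ∀ y : Fin m₂ → ℂ,
      cconv (mulVecF D x) (mulVecF E y) = cconv (mulVecF D x₀) (mulVecF E y₀) →
      ∃ σ : ℂ, σ ≠ 0 ∧ x = σ • x₀ ∧ y = σ⁻¹ • y₀) :
    m₁ + m₂ - 1 ≤ n :=
  subband_identifiability_necessary_general E hdisj hcover D hD x₀ y₀ hy₀ hident
end
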